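/- arXiv:1611.08271 — 6 statements merged into one kernel-verified Lean document; each statement's English description precedes it below -/
import Mathlib

section
/- Let k ≥ 2 and j ≥ 1 be integers and let G be the thin spider S_t[H,k,j] whose head graph H is the edgeless graph on j vertices. Then the characteristic polynomial of the Laplacian matrix L(G) (a real matrix of size 2k+j) equals X · (X − k)^{j−1} · (X² − (k+j+2)X + (k+j))^{k−1} · (X² − (k+j+2)X + (2k+j)). Equivalently, the Laplacian eigenvalues of G are (k+j+2 ± √((k+j)²+4))/2 each with multiplicity k−1, k with multiplicity j−1, (k+j+2 ± √((k+j)²+4−4k))/2 each with multiplicity 1, and 0 with multiplicity 1. -/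
open SimpleGraph Polynomial

/-- Relation generating the edges of the thin spider `S_t[H,k,j]`: body `C = inl`,
legs `S = inr ∘ inl`, head `R = inr ∘ inr` carrying the head graph `H`. -/
def thinSpiderRel (k j : ℕ) (H : SimpleGraph (Fin j)) :
    (Fin k ⊕ Fin k ⊕ Fin j) → (Fin k ⊕ Fin k ⊕ Fin j) → Prop := fun u v =>
  (∃ i m : Fin k, u = Sum.inl i ∧ v = Sum.inl m) ∨
  (∃ i : Fin k, u = Sum.inl i ∧ v = Sum.inr (Sum.inl i)) ∨
  (∃ (i : Fin k) (r : Fin j), u = Sum.inl i ∧ v = Sum.inr (Sum.inr r)) ∨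
  (∃ r s : Fin j, H.Adj r s ∧ u = Sum.inr (Sum.inr r) ∧ v = Sum.inr (Sum.inr s))

/-- The thin spider `S_t[H,k,j]`: the body `C` is a clique of size `k`, the legs `S`
form an independent set of size `k` with `sᵢ` adjacent to `cₘ` iff `i = m`, every head
vertex is adjacent to every body vertex and to no leg, and the head induces `H`. -/
def thinSpider (k j : ℕ) (H : SimpleGraph (Fin j)) :
    SimpleGraph (Fin k ⊕ Fin k ⊕ Fin j) :=
  SimpleGraph.fromRel (thinSpiderRel k j H)

instance (k j : ℕ) (H : SimpleGraph (Fin j)) [DecidableRel H.Adj] :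
    DecidableRel (thinSpiderRel k j H) := fun u v => by
  unfold thinSpiderRel; infer_instance

instance (k j : ℕ) (H : SimpleGraph (Fin j)) [DecidableRel H.Adj] :
    DecidableRel (thinSpider k j H).Adj := fun u v =>
  inferInstanceAs (Decidable (u ≠ v ∧ (thinSpiderRel k j H u v ∨ thinSpiderRel k j H v u)))

section Aux

open Finset Matrix

variable {k j : ℕ}

lemma ts_adj_ll (a b : Fin k) : (thinSpider k j ⊥).Adj (Sum.inl a) (Sum.inl b) ↔ a ≠ b := by
  simp [thinSpider, thinSpiderRel]

lemma ts_adj_ls (a b : Fin k) :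
    (thinSpider k j ⊥).Adj (Sum.inl a) (Sum.inr (Sum.inl b)) ↔ a = b := by
  simp [thinSpider, thinSpiderRel, eq_comm]

lemma ts_adj_sl (a b : Fin k) :
    (thinSpider k j ⊥).Adj (Sum.inr (Sum.inl a)) (Sum.inl b) ↔ a = b := by
  rw [SimpleGraph.adj_comm, ts_adj_ls, eq_comm]

lemma ts_adj_lr (a : Fin k) (r : Fin j) :
    (thinSpider k j ⊥).Adj (Sum.inl a) (Sum.inr (Sum.inr r)) := by
  simp [thinSpider, thinSpiderRel]

lemma ts_adj_rl (a : Fin k) (r : Fin j) :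
    (thinSpider k j ⊥).Adj (Sum.inr (Sum.inr r)) (Sum.inl a) :=
  ((thinSpider k j ⊥).adj_comm _ _).mp (ts_adj_lr a r)

lemma ts_adj_ss (a b : Fin k) :
    ¬ (thinSpider k j ⊥).Adj (Sum.inr (Sum.inl a)) (Sum.inr (Sum.inl b)) := by
  simp [thinSpider, thinSpiderRel]

lemma ts_adj_sr (a : Fin k) (r : Fin j) :
    ¬ (thinSpider k j ⊥).Adj (Sum.inr (Sum.inl a)) (Sum.inr (Sum.inr r)) := by
  simp [thinSpider, thinSpiderRel]

lemma ts_adj_rs (a : Fin k) (r : Fin j) :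
    ¬ (thinSpider k j ⊥).Adj (Sum.inr (Sum.inr r)) (Sum.inr (Sum.inl a)) := by
  simp [thinSpider, thinSpiderRel]

lemma ts_adj_rr (r s : Fin j) :
    ¬ (thinSpider k j ⊥).Adj (Sum.inr (Sum.inr r)) (Sum.inr (Sum.inr s)) := by
  simp [thinSpider, thinSpiderRel]

lemma ts_deg (v : Fin k ⊕ Fin k ⊕ Fin j) :
    (thinSpider k j ⊥).degree v = ∑ w, if (thinSpider k j ⊥).Adj v w then 1 else 0 := by
  rw [SimpleGraph.degree, neighborFinset_eq_filter, Finset.card_filter]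

lemma ts_deg_l (a : Fin k) : (thinSpider k j ⊥).degree (Sum.inl a) = k + j := by
  rw [ts_deg, Fintype.sum_sum_type, Fintype.sum_sum_type]
  simp only [ts_adj_ll, ts_adj_ls, ts_adj_lr, if_true]
  rw [Finset.sum_ite_eq]
  have key : (∑ x : Fin k, if a ≠ x then 1 else 0) + (∑ x : Fin k, if a = x then 1 else 0) = k := by
    rw [← Finset.sum_add_distrib]
    calc (∑ x : Fin k, ((if a ≠ x then 1 else 0) + if a = x then 1 else 0))
        = ∑ _x : Fin k, 1 := Finset.sum_congr rfl (fun x _ => by by_cases h : a = x <;> simp [h])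
      _ = k := by simp
  rw [Finset.sum_ite_eq] at key
  simp only [Finset.mem_univ, if_true, Finset.sum_const, Finset.card_univ, Fintype.card_fin,
    smul_eq_mul, mul_one] at key ⊢
  omega

lemma ts_deg_s (a : Fin k) : (thinSpider k j ⊥).degree (Sum.inr (Sum.inl a)) = 1 := by
  rw [ts_deg, Fintype.sum_sum_type, Fintype.sum_sum_type]
  simp [ts_adj_sl, ts_adj_ss, ts_adj_sr, Finset.sum_ite_eq]

lemma ts_deg_r (r : Fin j) : (thinSpider k j ⊥).degree (Sum.inr (Sum.inr r)) = k := by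
  rw [ts_deg, Fintype.sum_sum_type, Fintype.sum_sum_type]
  simp [ts_adj_rl, ts_adj_rs, ts_adj_rr]

/-- Vertex type of the thin spider with `k = K+1`, `j = J+1`. -/
abbrev tsV (K J : ℕ) := Fin (K+1) ⊕ Fin (K+1) ⊕ Fin (J+1)

/-- Explicit form of the Laplacian matrix. -/
def tsLap (K J : ℕ) : Matrix (tsV K J) (tsV K J) ℝ :=
  fun u v => match u, v with
  | .inl a, .inl b => if a = b then (K:ℝ)+(J:ℝ)+2 else -1
  | .inl a, .inr (.inl b) => if a = b then -1 else 0
  | .inl _, .inr (.inr _) => -1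
  | .inr (.inl a), .inl b => if a = b then -1 else 0
  | .inr (.inl a), .inr (.inl b) => if a = b then 1 else 0
  | .inr (.inl _), .inr (.inr _) => 0
  | .inr (.inr _), .inl _ => -1
  | .inr (.inr _), .inr (.inl _) => 0
  | .inr (.inr r), .inr (.inr s) => if r = s then (K:ℝ)+1 else 0

lemma ts_lap_eq (K J : ℕ) : (thinSpider (K+1) (J+1) ⊥).lapMatrix ℝ = tsLap K J := by
  ext u v
  rcases u with a | a | r <;> rcases v with b | b | s <;>
    simp only [lapMatrix, degMatrix, Matrix.sub_apply, Matrix.diagonal_apply, adjMatrix_apply,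
      tsLap, ts_adj_ll, ts_adj_ls, ts_adj_sl, ts_adj_lr, ts_adj_rl, ts_adj_ss, ts_adj_sr,
      ts_adj_rs, ts_adj_rr, ts_deg_l, ts_deg_s, ts_deg_r, Sum.inl.injEq, Sum.inr.injEq,
      if_true, if_false, iff_true, iff_false, reduceCtorEq] <;>
    first
      | (split_ifs with h <;> simp_all <;> push_cast <;> ring)
      | norm_num

/-- Change-of-basis block: first column all ones, column `b ≠ 0` is `e_b - e_0`. -/
def tsP {n : ℕ} (a b : Fin (n+1)) : ℝ :=
  if b = 0 then 1 else (if a = b then 1 else 0) - (if a = 0 then 1 else 0)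

/-- Inverse of `tsP`. -/
noncomputable def tsQ {n : ℕ} (a b : Fin (n+1)) : ℝ :=
  if a = 0 then ((n:ℝ)+1)⁻¹ else (if a = b then 1 else 0) - ((n:ℝ)+1)⁻¹

lemma fin_zero_ne_succ {n : ℕ} (x : Fin n) : ((0 : Fin (n+1)) = x.succ) ↔ False :=
  iff_false_intro (Fin.succ_ne_zero x).symm

lemma tsP_zero {n : ℕ} (a : Fin (n+1)) : tsP a 0 = 1 := by simp [tsP]

lemma sum_tsP_col {n : ℕ} (b : Fin (n+1)) :
    ∑ a, tsP a b = if b = 0 then (n:ℝ)+1 else 0 := by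
  induction b using Fin.cases with
  | zero => simp [tsP, Finset.sum_const, Finset.card_univ]
  | succ i =>
      simp [tsP, Fin.succ_ne_zero, Finset.sum_sub_distrib, Finset.sum_ite_eq']

lemma sum_tsPQ {n : ℕ} (a c : Fin (n+1)) :
    ∑ b, tsP a b * tsQ b c = if a = c then 1 else 0 := by
  have hn : ((n:ℝ)+1) ≠ 0 := by positivity
  rw [Fin.sum_univ_succ]
  induction a using Fin.cases with
  | zero =>
      induction c using Fin.cases with
      | zero =>
          simp only [tsP, tsQ, Fin.succ_ne_zero, fin_zero_ne_succ, if_true, if_false,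
            if_neg (Fin.succ_ne_zero _), eq_self_iff_true, ite_false, ite_true]
          simp [Finset.sum_const, Finset.card_univ]
          field_simp
          ring
      | succ c' =>
          simp only [tsP, tsQ, Fin.succ_ne_zero, fin_zero_ne_succ, Fin.succ_inj, if_true, if_false,
            if_neg (Fin.succ_ne_zero _), eq_self_iff_true, ite_false, ite_true]
          simp [Finset.sum_sub_distrib, Finset.sum_ite_eq', Finset.sum_const, Finset.card_univ]
          field_simp
          ring
  | succ a' =>
      induction c using Fin.cases with
      | zero =>
          simp only [tsP, tsQ, Fin.succ_ne_zero, fin_zero_ne_succ, Fin.succ_inj, if_true, if_false,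
            if_neg (Fin.succ_ne_zero _), eq_self_iff_true, ite_false, ite_true]
          simp [Finset.sum_sub_distrib, Finset.sum_ite_eq', mul_sub]
      | succ c' =>
          simp only [tsP, tsQ, Fin.succ_ne_zero, fin_zero_ne_succ, Fin.succ_inj, if_true, if_false,
            if_neg (Fin.succ_ne_zero _), eq_self_iff_true, ite_false, ite_true]
          simp [Finset.sum_sub_distrib, Finset.sum_ite_eq', sub_mul, mul_sub, ite_mul, mul_ite,
            Finset.sum_const, Finset.card_univ]

/-- Block-diagonal change-of-basis matrix on the vertex set. -/
def tsPM (K J : ℕ) : Matrix (tsV K J) (tsV K J) ℝ := fun u v =>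
  match u, v with
  | .inl a, .inl b => tsP a b
  | .inr (.inl a), .inr (.inl b) => tsP a b
  | .inr (.inr a), .inr (.inr b) => tsP a b
  | _, _ => 0

/-- Inverse of `tsPM`. -/
noncomputable def tsQM (K J : ℕ) : Matrix (tsV K J) (tsV K J) ℝ := fun u v =>
  match u, v with
  | .inl a, .inl b => tsQ a b
  | .inr (.inl a), .inr (.inl b) => tsQ a b
  | .inr (.inr a), .inr (.inr b) => tsQ a b
  | _, _ => 0

/-- The Laplacian in the new basis. -/
def tsM (K J : ℕ) : Matrix (tsV K J) (tsV K J) ℝ := fun u v =>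
  match u, v with
  | .inl a, .inl b => if a = b then (if a = 0 then (J:ℝ)+2 else (K:ℝ)+(J:ℝ)+3) else 0
  | .inl a, .inr (.inl b) => if a = b then -1 else 0
  | .inl a, .inr (.inr r) => if a = 0 ∧ r = 0 then -((J:ℝ)+1) else 0
  | .inr (.inl a), .inl b => if a = b then -1 else 0
  | .inr (.inl a), .inr (.inl b) => if a = b then 1 else 0
  | .inr (.inr r), .inl b => if r = 0 ∧ b = 0 then -((K:ℝ)+1) else 0
  | .inr (.inr r), .inr (.inr s) => if r = s then (K:ℝ)+1 else 0
  | _, _ => 0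

lemma tsPQ_one (K J : ℕ) : tsPM K J * tsQM K J = 1 := by
  ext u v
  rcases u with a | a | a <;> rcases v with b | b | b <;>
    simp [Matrix.mul_apply, Fintype.sum_sum_type, tsPM, tsQM, Matrix.one_apply, sum_tsPQ]

lemma tsLP_PM (K J : ℕ) : tsLap K J * tsPM K J = tsPM K J * tsM K J := by
  ext u v
  rcases u with a | a | a <;> rcases v with b | b | b <;>
    simp only [Matrix.mul_apply, Fintype.sum_sum_type, tsLap, tsPM, tsM,
      mul_zero, zero_mul, mul_one, one_mul, Finset.sum_const_zero, add_zero, zero_add,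
      ite_mul, mul_ite, neg_mul, mul_neg, Finset.sum_ite_eq, Finset.sum_ite_eq',
      Finset.mem_univ, if_true]
  · -- (inl, inl)
    have h : ∀ x, (if a = x then ((K:ℝ)+(J:ℝ)+2) * tsP x b else -tsP x b)
        = (if a = x then ((K:ℝ)+(J:ℝ)+3) * tsP x b else 0) - tsP x b := by
      intro x; split_ifs <;> ring
    rw [Finset.sum_congr rfl (fun x _ => h x), Finset.sum_sub_distrib, Finset.sum_ite_eq,
      sum_tsP_col]
    simp only [Finset.mem_univ, if_true]
    split_ifs with h1 <;> simp [tsP_zero, h1] <;> ring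
  · -- (inl, inrr)
    by_cases hb : b = 0 <;>
      simp [hb, sum_tsP_col, tsP_zero, Finset.sum_ite_eq', Finset.sum_neg_distrib]
  · simp
  · simp
  · simp
  · -- (inrr, inl)
    by_cases hb : b = 0 <;>
      simp [hb, sum_tsP_col, tsP_zero, Finset.sum_ite_eq', Finset.sum_neg_distrib]
  · simp
  · simp [mul_comm]

lemma charpoly_eq_of_conj {n : Type*} [Fintype n] [DecidableEq n] (A B P Q : Matrix n n ℝ)
    (hPQ : P * Q = 1) (h : A * P = P * B) : B.charpoly = A.charpoly := by
  have hdet : P.det * Q.det = 1 := by rw [← Matrix.det_mul, hPQ, Matrix.det_one]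
  have hP : P.det ≠ 0 := left_ne_zero_of_mul_eq_one hdet
  set f := (Polynomial.C : ℝ →+* ℝ[X]) with hf
  have hmul : (A * P).map f = A.map f * P.map f := Matrix.map_mul
  have hmul2 : (P * B).map f = P.map f * B.map f := Matrix.map_mul
  have key : charmatrix A * P.map f = P.map f * charmatrix B := by
    unfold charmatrix
    rw [sub_mul, mul_sub, RingHom.mapMatrix_apply, RingHom.mapMatrix_apply, ← hmul, h, hmul2,
      (scalar_commute (X : ℝ[X]) (fun r' => Commute.all _ _) (P.map f)).eq]
  have hdet2 : A.charpoly * (P.map f).det = (P.map f).det * B.charpoly := by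
    rw [Matrix.charpoly, Matrix.charpoly, ← Matrix.det_mul, key, Matrix.det_mul]
  have hPf : (P.map f).det ≠ 0 := by
    have : (P.map ⇑f).det = f P.det := (RingHom.map_det f P).symm
    rw [this]
    simpa [hf] using hP
  exact (mul_left_cancel₀ hPf (by rw [← hdet2, mul_comm])).symm

/-- 2×2 block of the transformed Laplacian. -/
def tsB2 (K J : ℕ) : Matrix (Fin 2) (Fin 2) ℝ := !![(K:ℝ)+(J:ℝ)+3, -1; -1, 1]

/-- 3×3 block of the transformed Laplacian. -/
def tsT3 (K J : ℕ) : Matrix (Fin 3) (Fin 3) ℝ :=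
  !![(J:ℝ)+2, -1, -((J:ℝ)+1); -1, 1, 0; -((K:ℝ)+1), 0, (K:ℝ)+1]

/-- The transformed Laplacian assembled from blocks. -/
def tsMB (K J : ℕ) : Matrix ((Fin 2 × Fin K) ⊕ (Fin 3 ⊕ Fin J)) ((Fin 2 × Fin K) ⊕ (Fin 3 ⊕ Fin J)) ℝ :=
  fromBlocks (blockDiagonal fun _ : Fin K => tsB2 K J) 0 0
    (fromBlocks (tsT3 K J) 0 0 (diagonal fun _ : Fin J => (K:ℝ)+1))

/-- Reindexing bijection between block indices and vertices. -/
def tsE (K J : ℕ) : (Fin 2 × Fin K) ⊕ (Fin 3 ⊕ Fin J) ≃ tsV K J where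
  toFun x := match x with
    | .inl (x, i) => ![Sum.inl i.succ, Sum.inr (Sum.inl i.succ)] x
    | .inr (.inl y) => ![Sum.inl 0, Sum.inr (Sum.inl 0), Sum.inr (Sum.inr 0)] y
    | .inr (.inr r) => Sum.inr (Sum.inr r.succ)
  invFun v := match v with
    | .inl a => Fin.cases (Sum.inr (Sum.inl 0)) (fun i => Sum.inl (0, i)) a
    | .inr (.inl a) => Fin.cases (Sum.inr (Sum.inl 1)) (fun i => Sum.inl (1, i)) a
    | .inr (.inr r) => Fin.cases (Sum.inr (Sum.inl 2)) (fun r' => Sum.inr (Sum.inr r')) r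
  left_inv := by
    rintro (⟨x, i⟩ | (y | r))
    · fin_cases x <;> simp
    · fin_cases y <;> simp
    · simp
  right_inv := by
    rintro (a | a | r)
    · induction a using Fin.cases <;> simp
    · induction a using Fin.cases <;> simp
    · induction r using Fin.cases <;> simp

lemma tsM_eq (K J : ℕ) : tsM K J = Matrix.reindex (tsE K J) (tsE K J) (tsMB K J) := by
  ext u v
  rw [Matrix.reindex_apply]
  rcases u with a | a | a <;> rcases v with b | b | b <;>
    induction a using Fin.cases <;> induction b using Fin.cases <;>
    simp [tsM, tsMB, tsE, tsB2, tsT3, Fin.succ_ne_zero, fin_zero_ne_succ, Fin.succ_inj,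
      blockDiagonal_apply, diagonal, Matrix.one_apply]

lemma charmatrix_blockDiagonal' {o m R : Type*} [DecidableEq o] [Fintype o] [DecidableEq m]
    [Fintype m] [CommRing R] (M : o → Matrix m m R) :
    charmatrix (blockDiagonal M) = blockDiagonal (fun i => charmatrix (M i)) := by
  ext ⟨i, k⟩ ⟨i', k'⟩
  by_cases h : (⟨i, k⟩ : m × o) = ⟨i', k'⟩
  · rw [h, charmatrix_apply_eq, blockDiagonal_apply]
    simp [charmatrix_apply_eq]
  · rw [charmatrix_apply_ne _ _ _ h, blockDiagonal_apply, blockDiagonal_apply]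
    by_cases hk : k = k'
    · subst hk
      have hii : i ≠ i' := fun hii => h (by rw [hii])
      simp [charmatrix_apply_ne _ _ _ hii]
    · simp [hk]

lemma charmatrix_diagonal' {m R : Type*} [DecidableEq m] [Fintype m] [CommRing R] (d : m → R) :
    charmatrix (diagonal d) = diagonal (fun i => X - C (d i)) := by
  ext i i'
  by_cases h : i = i'
  · subst h; simp
  · simp [charmatrix_apply_ne _ _ _ h, diagonal_apply_ne _ h]

lemma tsB2_charpoly (K J : ℕ) : (tsB2 K J).charpoly =
    X^2 - C ((K:ℝ)+(J:ℝ)+4) * X + C ((K:ℝ)+(J:ℝ)+2) := by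
  rw [Matrix.charpoly, det_fin_two]
  simp [tsB2, charmatrix_apply_eq, charmatrix_apply_ne, map_add, map_ofNat]
  ring

lemma tsT3_charpoly (K J : ℕ) : (tsT3 K J).charpoly =
    X^3 - C ((K:ℝ)+(J:ℝ)+4)*X^2 + C (2*(K:ℝ)+(J:ℝ)+3)*X := by
  rw [Matrix.charpoly, det_fin_three]
  simp [tsT3, charmatrix_apply_eq, charmatrix_apply_ne, map_add, map_ofNat, _root_.map_mul]
  ring

lemma tsMB_charpoly (K J : ℕ) : (tsMB K J).charpoly =
    (X^2 - C ((K:ℝ)+(J:ℝ)+4) * X + C ((K:ℝ)+(J:ℝ)+2))^K *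
      ((X^3 - C ((K:ℝ)+(J:ℝ)+4)*X^2 + C (2*(K:ℝ)+(J:ℝ)+3)*X) * (X - C ((K:ℝ)+1))^J) := by
  rw [Matrix.charpoly, tsMB, charmatrix_fromBlocks, charmatrix_fromBlocks]
  simp only [Matrix.map_zero _ (map_zero C), neg_zero]
  rw [det_fromBlocks_zero₂₁, det_fromBlocks_zero₂₁, charmatrix_blockDiagonal',
    det_blockDiagonal, charmatrix_diagonal', det_diagonal]
  rw [show (tsB2 K J).charmatrix.det = (tsB2 K J).charpoly from rfl,
    show (tsT3 K J).charmatrix.det = (tsT3 K J).charpoly from rfl,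
    tsB2_charpoly, tsT3_charpoly]
  simp [Finset.prod_const, Finset.card_univ]

end Aux

/-- The characteristic polynomial of the Laplacian matrix of the thin spider
`S_t[H,k,j]` whose head graph is the edgeless graph on `j ≥ 1` vertices. -/
theorem thinSpider_edgelessHead_lapMatrix_charpoly (k j : ℕ) (hk : 2 ≤ k) (hj : 1 ≤ j) :
    ((thinSpider k j ⊥).lapMatrix ℝ).charpoly =
      X * (X - C (k : ℝ)) ^ (j - 1) *
        (X ^ 2 - C ((k : ℝ) + (j : ℝ) + 2) * X + C ((k : ℝ) + (j : ℝ))) ^ (k - 1) *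
        (X ^ 2 - C ((k : ℝ) + (j : ℝ) + 2) * X + C (2 * (k : ℝ) + (j : ℝ))) := by
  obtain ⟨K, rfl⟩ : ∃ K, k = K + 1 := ⟨k - 1, by omega⟩
  obtain ⟨J, rfl⟩ : ∃ J, j = J + 1 := ⟨j - 1, by omega⟩
  rw [ts_lap_eq]
  have h1 : (tsLap K J).charpoly = (tsM K J).charpoly :=
    (charpoly_eq_of_conj (tsLap K J) (tsM K J) (tsPM K J) (tsQM K J)
      (tsPQ_one K J) (tsLP_PM K J)).symm
  rw [h1, tsM_eq, Matrix.charpoly_reindex, tsMB_charpoly]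
  have e1 : (K + 1) - 1 = K := by omega
  have e2 : (J + 1) - 1 = J := by omega
  rw [e1, e2]
  push_cast
  simp only [map_add, map_one, _root_.map_mul, map_ofNat]
  ring
end

section
/- Let k ≥ 2 be an integer and let G be the headless thin spider S_t[k] (on 2k vertices). Then the characteristic polynomial of the Laplacian matrix L(G) equals X · (X − 2) · (X² − (k+2)X + k)^{k−1}. Equivalently, the Laplacian eigenvalues of G are (k+2 ± √(k²+4))/2 each with multiplicity k−1, together with the simple eigenvalues 0 and 2. -/
open SimpleGraph Polynomial

/-- Relation generating the edges of the headless thin spider `S_t[k]` on `2k`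
vertices: body `C = inl` is a clique, legs `S = inr` form an independent set, and
`sᵢ` is adjacent to `cₘ` iff `i = m`. -/
def headlessThinSpiderRel (k : ℕ) : (Fin k ⊕ Fin k) → (Fin k ⊕ Fin k) → Prop := fun u v =>
  (∃ i m : Fin k, u = Sum.inl i ∧ v = Sum.inl m) ∨
  (∃ i : Fin k, u = Sum.inl i ∧ v = Sum.inr i)

/-- The headless thin spider `S_t[k]`. -/
def headlessThinSpider (k : ℕ) : SimpleGraph (Fin k ⊕ Fin k) :=
  SimpleGraph.fromRel (headlessThinSpiderRel k)

instance (k : ℕ) : DecidableRel (headlessThinSpiderRel k) := fun u v => by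
  unfold headlessThinSpiderRel; infer_instance

instance (k : ℕ) : DecidableRel (headlessThinSpider k).Adj := fun u v =>
  inferInstanceAs (Decidable (u ≠ v ∧ (headlessThinSpiderRel k u v ∨ headlessThinSpiderRel k v u)))

/-!
Listing the clique vertices first, `L = [[(k+1)I - J, -I], [-I, I]]` with `J` the all-ones
matrix. The lower blocks of `xI - L` are scalar, so they commute and
`det (xI - L) = det ((x-1)(xI - (k+1)I + J) - I) = det (q I - (1-x) J)` with
`q = x² - (k+2)x + k`. Since `(1-x) J` has rank one, this is `q^(k-1) (q - k(1-x))`, and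
`q + k(x-1) = x(x-2)`.
-/

namespace Matrix

variable {R : Type*} [CommRing R] {n : Type*} [Fintype n] [DecidableEq n]

theorem det_fromBlocks_of_commute [IsDomain R] (A B C D : Matrix n n R) (hCD : Commute C D)
    (hD : D.det ≠ 0) : (fromBlocks A B C D).det = (A * D - B * C).det := by
  have hmul : fromBlocks A B C D * fromBlocks D 0 (-C) 1 = fromBlocks (A * D - B * C) B 0 D := by
    rw [fromBlocks_multiply, hCD.eq]
    simp [sub_eq_add_neg]
  have hdet := congrArg det hmul
  rw [det_mul, det_fromBlocks_zero₁₂, det_fromBlocks_zero₂₁, det_one, mul_one] at hdet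
  exact mul_right_cancel₀ hD hdet

theorem det_scalar_sub_vecMulVec (t : R) (u v : n → R) :
    (scalar n t - vecMulVec u v).det =
      t ^ Fintype.card n - (u ⬝ᵥ v) * t ^ (Fintype.card n - 1) := by
  rw [← eval_charpoly, charpoly_vecMulVec]
  simp

end Matrix

open Matrix

section

variable {k : ℕ}

theorem headlessThinSpider_adj_inl_inl (i j : Fin k) :
    (headlessThinSpider k).Adj (.inl i) (.inl j) ↔ i ≠ j := by
  simp [headlessThinSpider, headlessThinSpiderRel]

theorem headlessThinSpider_adj_inl_inr (i j : Fin k) :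
    (headlessThinSpider k).Adj (.inl i) (.inr j) ↔ i = j := by
  simp [headlessThinSpider, headlessThinSpiderRel, eq_comm]

theorem headlessThinSpider_adj_inr_inl (i j : Fin k) :
    (headlessThinSpider k).Adj (.inr i) (.inl j) ↔ i = j := by
  simp [headlessThinSpider, headlessThinSpiderRel, eq_comm]

theorem headlessThinSpider_not_adj_inr_inr (i j : Fin k) :
    ¬ (headlessThinSpider k).Adj (.inr i) (.inr j) := by
  simp [headlessThinSpider, headlessThinSpiderRel]

theorem headlessThinSpider_degree_inl (i : Fin k) :
    (headlessThinSpider k).degree (.inl i) = k := by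
  have hnbr : (headlessThinSpider k).neighborFinset (.inl i) =
      insert (.inr i) ((Finset.univ.erase i).map .inl) := by
    ext (u | u) <;> simp [headlessThinSpider_adj_inl_inl, headlessThinSpider_adj_inl_inr, eq_comm]
  rw [← card_neighborFinset_eq_degree, hnbr, Finset.card_insert_of_notMem (by simp),
    Finset.card_map, Finset.card_erase_of_mem (Finset.mem_univ i), Finset.card_fin,
    Nat.sub_add_cancel i.pos]

theorem headlessThinSpider_degree_inr (i : Fin k) :
    (headlessThinSpider k).degree (.inr i) = 1 := by
  have hnbr : (headlessThinSpider k).neighborFinset (.inr i) = {.inl i} := by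
    ext (u | u) <;>
      simp [headlessThinSpider_adj_inr_inl, headlessThinSpider_not_adj_inr_inr, eq_comm]
  rw [← card_neighborFinset_eq_degree, hnbr, Finset.card_singleton]

theorem headlessThinSpider_lapMatrix (R : Type*) [Ring R] :
    (headlessThinSpider k).lapMatrix R =
      fromBlocks (scalar (Fin k) ((k : R) + 1) - of fun _ _ => 1) (-1) (-1) 1 := by
  ext (i | i) (j | j) <;> by_cases h : i = j <;>
    simp [lapMatrix, degMatrix, adjMatrix, h, one_apply, headlessThinSpider_adj_inl_inl,
      headlessThinSpider_adj_inl_inr, headlessThinSpider_adj_inr_inl,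
      headlessThinSpider_not_adj_inr_inr, headlessThinSpider_degree_inl,
      headlessThinSpider_degree_inr]

end

/-- The characteristic polynomial of the Laplacian matrix of the headless thin
spider `S_t[k]`, `k ≥ 2`. -/
theorem headlessThinSpider_lapMatrix_charpoly (k : ℕ) (hk : 2 ≤ k) :
    ((headlessThinSpider k).lapMatrix ℝ).charpoly =
      X * (X - C (2 : ℝ)) * (X ^ 2 - C ((k : ℝ) + 2) * X + C (k : ℝ)) ^ (k - 1) := by
  set q : ℝ[X] := X ^ 2 - C ((k : ℝ) + 2) * X + C (k : ℝ)
  have hoff : -(-1 : Matrix (Fin k) (Fin k) ℝ).map C = 1 := by simp [← RingHom.mapMatrix_apply]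
  have hschur :
      charmatrix (scalar (Fin k) ((k : ℝ) + 1) - of fun _ _ => 1) * charmatrix 1 - 1 * 1 =
        scalar (Fin k) q - vecMulVec (fun _ => 1 - X) (fun _ => 1) := by
    ext i j : 1
    by_cases h : i = j <;> simp [q, h, one_apply, mul_diagonal, vecMulVec_apply, C_ofNat]
    ring
  rw [charpoly, headlessThinSpider_lapMatrix, charmatrix_fromBlocks, hoff,
    det_fromBlocks_of_commute _ _ _ _ (Commute.one_left _) (charpoly_monic 1).ne_zero, hschur,
    det_scalar_sub_vecMulVec]
  obtain ⟨m, rfl⟩ : ∃ m, k = m + 1 := ⟨k - 1, by omega⟩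
  simp [q, pow_succ, dotProduct, C_ofNat]
  ring
end

section
/- If G is a thin spider (with arbitrary, possibly empty, head graph H), then G is not L-integral; that is, the Laplacian matrix of G has at least one eigenvalue that is not an integer. -/
open SimpleGraph Polynomial

/-- A finite simple graph is `L`-integral if every eigenvalue of its Laplacian
matrix (over `ℝ`) is an integer. -/
def LIntegral {V : Type*} [Fintype V] [DecidableEq V] (G : SimpleGraph V)
    [DecidableRel G.Adj] : Prop :=
  ∀ μ ∈ spectrum ℝ (G.lapMatrix ℝ), ∃ z : ℤ, μ = (z : ℝ)

section Aux

open Finset Matrix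

lemma lap_mulVec {W : Type*} [Fintype W] [DecidableEq W] (G : SimpleGraph W)
    [DecidableRel G.Adj] (x : W → ℝ) (u : W) :
    (G.lapMatrix ℝ *ᵥ x) u = ∑ v, if G.Adj u v then x u - x v else 0 := by
  rw [SimpleGraph.lapMatrix_mulVec_apply, SimpleGraph.degree_eq_sum_if_adj,
    SimpleGraph.neighborFinset_eq_filter, Finset.sum_filter, Finset.sum_mul,
    ← Finset.sum_sub_distrib]
  refine Finset.sum_congr rfl fun v _ => ?_
  split_ifs <;> simp

lemma eig_mem_spectrum {V : Type*} [Fintype V] [DecidableEq V] (M : Matrix V V ℝ) (μ : ℝ)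
    (x : V → ℝ) (hx : x ≠ 0) (h : M *ᵥ x = μ • x) : μ ∈ spectrum ℝ M := by
  rw [spectrum.mem_iff]
  intro hU
  rw [Matrix.isUnit_iff_isUnit_det] at hU
  have h0 : (algebraMap ℝ (Matrix V V ℝ) μ - M) *ᵥ x = 0 := by
    rw [Algebra.algebraMap_eq_smul_one, Matrix.sub_mulVec, Matrix.smul_mulVec,
      Matrix.one_mulVec, h, sub_self]
  have hdet := Matrix.exists_mulVec_eq_zero_iff.mp ⟨x, hx, h0⟩
  rw [hdet] at hU
  exact not_isUnit_zero hU

variable {k j : ℕ} {H : SimpleGraph (Fin j)}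

lemma ts_adj_CC (i m : Fin k) :
    (thinSpider k j H).Adj (Sum.inl i) (Sum.inl m) ↔ ¬ i = m := by
  simp [thinSpider, thinSpiderRel]

lemma ts_adj_CS (i m : Fin k) :
    (thinSpider k j H).Adj (Sum.inl i) (Sum.inr (Sum.inl m)) ↔ i = m := by
  simp [thinSpider, thinSpiderRel, eq_comm]

lemma ts_adj_CR (i : Fin k) (r : Fin j) :
    (thinSpider k j H).Adj (Sum.inl i) (Sum.inr (Sum.inr r)) ↔ True := by
  simp [thinSpider, thinSpiderRel]

lemma ts_adj_SC (i m : Fin k) :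
    (thinSpider k j H).Adj (Sum.inr (Sum.inl i)) (Sum.inl m) ↔ i = m := by
  simp [thinSpider, thinSpiderRel, eq_comm]

lemma ts_adj_SS (i m : Fin k) :
    (thinSpider k j H).Adj (Sum.inr (Sum.inl i)) (Sum.inr (Sum.inl m)) ↔ False := by
  simp [thinSpider, thinSpiderRel]

lemma ts_adj_SR (i : Fin k) (r : Fin j) :
    (thinSpider k j H).Adj (Sum.inr (Sum.inl i)) (Sum.inr (Sum.inr r)) ↔ False := by
  simp [thinSpider, thinSpiderRel]

lemma ts_adj_RC (r : Fin j) (m : Fin k) :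
    (thinSpider k j H).Adj (Sum.inr (Sum.inr r)) (Sum.inl m) ↔ True := by
  simp [thinSpider, thinSpiderRel]

lemma ts_adj_RS (r : Fin j) (m : Fin k) :
    (thinSpider k j H).Adj (Sum.inr (Sum.inr r)) (Sum.inr (Sum.inl m)) ↔ False := by
  simp [thinSpider, thinSpiderRel]

lemma ts_adj_RR (r s : Fin j) :
    (thinSpider k j H).Adj (Sum.inr (Sum.inr r)) (Sum.inr (Sum.inr s)) ↔ (H.Adj r s) := by
  have unpack : ∀ a b : Fin j,
      thinSpiderRel k j H (Sum.inr (Sum.inr a)) (Sum.inr (Sum.inr b)) → H.Adj a b := by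
    rintro a b (⟨i, m, h1, h2⟩ | ⟨i, h1, h2⟩ | ⟨i, r', h1, h2⟩ | ⟨r', s', hA, h1, h2⟩) <;> simp_all
  rw [thinSpider, SimpleGraph.fromRel_adj]
  constructor
  · rintro ⟨hne, hrel | hrel⟩
    · exact unpack _ _ hrel
    · exact (unpack _ _ hrel).symm
  · intro hA
    exact ⟨by simp [H.ne_of_adj hA], Or.inl (Or.inr (Or.inr (Or.inr ⟨r, s, hA, rfl, rfl⟩)))⟩

/-- The eigenvector candidate: values on the body `C`, legs `S`, head `R`. -/
def spiderVec (k j : ℕ) (a b : ℝ) : Fin k ⊕ Fin k ⊕ Fin j → ℝ :=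
  Sum.elim (fun m => if (m : ℕ) = 0 then a else if (m : ℕ) = 1 then -a else 0)
    (Sum.elim (fun m => if (m : ℕ) = 0 then b else if (m : ℕ) = 1 then -b else 0) (fun _ => 0))

lemma sum_fin_two {k : ℕ} (hk : 2 ≤ k) (v0 v1 c : ℝ) :
    ∑ m : Fin k, (if (m : ℕ) = 0 then v0 else if (m : ℕ) = 1 then v1 else c)
      = v0 + v1 + ((k : ℝ) - 2) * c := by
  have hre : ∀ m : Fin k, (if (m : ℕ) = 0 then v0 else if (m : ℕ) = 1 then v1 else c)
      = c + ((if m = (⟨0, by omega⟩ : Fin k) then v0 - c else 0)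
          + (if m = (⟨1, by omega⟩ : Fin k) then v1 - c else 0)) := by
    intro m
    by_cases h0 : (m : ℕ) = 0 <;> by_cases h1 : (m : ℕ) = 1 <;>
      simp [h0, h1, Fin.ext_iff] <;> ring
  rw [Finset.sum_congr rfl fun m _ => hre m, Finset.sum_add_distrib, Finset.sum_add_distrib,
    Finset.sum_const, Fintype.sum_ite_eq', Fintype.sum_ite_eq', Finset.card_univ,
    Fintype.card_fin, nsmul_eq_mul]
  ring

lemma spider_eigen (hk : 2 ≤ k) {μ : ℝ}
    (hμ : μ ^ 2 - ((k : ℝ) + (j : ℝ) + 2) * μ + ((k : ℝ) + (j : ℝ)) = 0)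
    [DecidableRel (thinSpider k j H).Adj] :
    (thinSpider k j H).lapMatrix ℝ *ᵥ spiderVec k j (1 - μ) 1
      = μ • spiderVec k j (1 - μ) 1 := by
  ext u
  rw [lap_mulVec, Pi.smul_apply, smul_eq_mul]
  simp only [Fintype.sum_sum_type]
  have hsumC : ∑ m : Fin k, spiderVec k j (1 - μ) 1 (Sum.inl m) = 0 := by
    rw [show ∑ m : Fin k, spiderVec k j (1 - μ) 1 (Sum.inl m)
        = ∑ m : Fin k, (if (m : ℕ) = 0 then (1 - μ) else if (m : ℕ) = 1 then -(1 - μ) else 0)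
      from rfl, sum_fin_two hk]
    ring
  obtain u | u | u := u
  · -- body vertex
    simp only [ts_adj_CC, ts_adj_CS, ts_adj_CR, if_true]
    have h1 : ∑ m : Fin k,
        (if ¬u = m then spiderVec k j (1 - μ) 1 (Sum.inl u)
            - spiderVec k j (1 - μ) 1 (Sum.inl m) else 0)
        = (k : ℝ) * spiderVec k j (1 - μ) 1 (Sum.inl u) := by
      have hre : ∀ m : Fin k, (if ¬u = m then spiderVec k j (1 - μ) 1 (Sum.inl u)
            - spiderVec k j (1 - μ) 1 (Sum.inl m) else 0)
          = (spiderVec k j (1 - μ) 1 (Sum.inl u) - spiderVec k j (1 - μ) 1 (Sum.inl m))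
            - (if u = m then spiderVec k j (1 - μ) 1 (Sum.inl u)
                - spiderVec k j (1 - μ) 1 (Sum.inl m) else 0) := by
        intro m
        by_cases h : u = m <;> simp [h]
      rw [Finset.sum_congr rfl fun m _ => hre m, Finset.sum_sub_distrib,
        Finset.sum_sub_distrib, Finset.sum_const, Fintype.sum_ite_eq, hsumC,
        Finset.card_univ, Fintype.card_fin, nsmul_eq_mul]
      ring
    rw [h1, Fintype.sum_ite_eq]
    simp only [spiderVec, Sum.elim_inl, Sum.elim_inr, sub_zero, Finset.sum_const,
      Finset.card_univ, Fintype.card_fin, nsmul_eq_mul]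
    by_cases h0 : (u : ℕ) = 0
    · simp only [h0, if_true]
      push_cast
      linear_combination hμ
    · by_cases h1 : (u : ℕ) = 1
      · simp only [h0, h1, if_true, if_false]
        norm_num
        push_cast
        linear_combination -hμ
      · simp only [h0, h1, if_false]
        ring
  · -- leg vertex
    simp only [ts_adj_SC, ts_adj_SS, ts_adj_SR, if_false]
    rw [Fintype.sum_ite_eq, Finset.sum_const_zero, Finset.sum_const_zero]
    simp only [spiderVec, Sum.elim_inl, Sum.elim_inr]
    by_cases h0 : (u : ℕ) = 0
    · simp only [h0, if_true]
      ring
    · by_cases h1 : (u : ℕ) = 1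
      · simp only [h0, h1, if_true, if_false]
        norm_num
        ring
      · simp only [h0, h1, if_false]
        ring
  · -- head vertex
    simp only [ts_adj_RC, ts_adj_RS, ts_adj_RR, if_true, if_false]
    have hx0 : ∀ v : Fin j, spiderVec k j (1 - μ) 1 (Sum.inr (Sum.inr v)) = 0 := fun _ => rfl
    simp only [hx0, zero_sub, sub_self, ite_self, Finset.sum_const_zero, sub_zero,
      Finset.sum_neg_distrib, hsumC]
    simp
end Aux

open Finset Matrix in

/-- A thin spider (with arbitrary, possibly empty, head graph) is not `L`-integral. -/
theorem thinSpider_not_LIntegral {V : Type*} [Fintype V] [DecidableEq V]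
    (G : SimpleGraph V) [DecidableRel G.Adj] (k j : ℕ) (hk : 2 ≤ k)
    (H : SimpleGraph (Fin j)) (h : Nonempty (G ≃g thinSpider k j H)) :
    ¬ LIntegral G := by
  classical
  obtain ⟨e⟩ := h
  set n : ℝ := (k : ℝ) + (j : ℝ) with hn
  have hd2 : (Real.sqrt (n ^ 2 + 4)) ^ 2 = n ^ 2 + 4 := Real.sq_sqrt (by positivity)
  set μ : ℝ := ((n + 2) + Real.sqrt (n ^ 2 + 4)) / 2 with hμdef
  have hμ : μ ^ 2 - ((k : ℝ) + (j : ℝ) + 2) * μ + ((k : ℝ) + (j : ℝ)) = 0 := by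
    rw [hμdef, ← hn]
    linear_combination hd2 / 4
  -- the eigenvector for G
  set x : Fin k ⊕ Fin k ⊕ Fin j → ℝ := spiderVec k j (1 - μ) 1 with hxdef
  have hx := spider_eigen (H := H) hk hμ
  set y : V → ℝ := fun v => x (e v) with hydef
  have hy : G.lapMatrix ℝ *ᵥ y = μ • y := by
    ext u
    have key : (G.lapMatrix ℝ *ᵥ y) u = ((thinSpider k j H).lapMatrix ℝ *ᵥ x) (e u) := by
      rw [lap_mulVec, lap_mulVec,
        ← Equiv.sum_comp e.toEquiv
          (fun w => if (thinSpider k j H).Adj (e u) w then x (e u) - x w else 0)]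
      refine Finset.sum_congr rfl fun v _ => ?_
      have : (thinSpider k j H).Adj (e u) (e v) ↔ G.Adj u v := e.map_adj_iff
      simp only [RelIso.coe_fn_toEquiv, this, hydef]
    rw [key, hx]
    simp [hydef, hxdef]
  have hy0 : y ≠ 0 := by
    intro hcon
    have h1 : y (e.symm (Sum.inr (Sum.inl ⟨0, by omega⟩))) = 0 := by rw [hcon]; rfl
    rw [hydef] at h1
    simp only [RelIso.apply_symm_apply] at h1
    rw [hxdef] at h1
    simp [spiderVec] at h1
  have hspec : μ ∈ spectrum ℝ (G.lapMatrix ℝ) := eig_mem_spectrum _ _ _ hy0 hy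
  intro hLI
  obtain ⟨z, hz⟩ := hLI μ hspec
  rw [hz] at hμ
  have hz2 : z ^ 2 - ((k : ℤ) + (j : ℤ) + 2) * z + ((k : ℤ) + (j : ℤ)) = 0 := by
    exact_mod_cast hμ
  have hw : (2 * z - ((k : ℤ) + (j : ℤ)) - 2) ^ 2 = ((k : ℤ) + (j : ℤ)) ^ 2 + 4 := by
    linear_combination 4 * hz2
  set w : ℤ := 2 * z - ((k : ℤ) + (j : ℤ)) - 2 with hwdef
  set N : ℤ := (k : ℤ) + (j : ℤ) with hNdef
  have hN : (2 : ℤ) ≤ N := by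
    have : (2 : ℤ) ≤ (k : ℤ) := by exact_mod_cast hk
    have : (0 : ℤ) ≤ (j : ℤ) := Int.ofNat_nonneg j
    omega
  have habs : N < |w| := by
    refine lt_of_pow_lt_pow_left₀ 2 (abs_nonneg w) ?_
    rw [sq_abs, hw]
    nlinarith
  have habs2 : N + 1 ≤ |w| := habs
  have : (N + 1) ^ 2 ≤ w ^ 2 := by
    rw [← sq_abs w]
    exact pow_le_pow_left₀ (by omega) habs2 2
  rw [hw] at this
  nlinarith
end

section
/- If G is a thick spider (with arbitrary, possibly empty, head graph H), then G is not L-integral; that is, the Laplacian matrix of G has at least one eigenvalue that is not an integer. -/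
open SimpleGraph Polynomial

/-- Relation generating the edges of the thick spider `S_T[H,k,j]`: as in the thin
spider, but `sᵢ` is adjacent to `cₘ` iff `i ≠ m`. -/
def thickSpiderRel (k j : ℕ) (H : SimpleGraph (Fin j)) :
    (Fin k ⊕ Fin k ⊕ Fin j) → (Fin k ⊕ Fin k ⊕ Fin j) → Prop := fun u v =>
  (∃ i m : Fin k, u = Sum.inl i ∧ v = Sum.inl m) ∨
  (∃ i m : Fin k, i ≠ m ∧ u = Sum.inl i ∧ v = Sum.inr (Sum.inl m)) ∨
  (∃ (i : Fin k) (r : Fin j), u = Sum.inl i ∧ v = Sum.inr (Sum.inr r)) ∨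
  (∃ r s : Fin j, H.Adj r s ∧ u = Sum.inr (Sum.inr r) ∧ v = Sum.inr (Sum.inr s))

/-- The thick spider `S_T[H,k,j]`. -/
def thickSpider (k j : ℕ) (H : SimpleGraph (Fin j)) :
    SimpleGraph (Fin k ⊕ Fin k ⊕ Fin j) :=
  SimpleGraph.fromRel (thickSpiderRel k j H)

instance (k j : ℕ) (H : SimpleGraph (Fin j)) [DecidableRel H.Adj] :
    DecidableRel (thickSpiderRel k j H) := fun u v => by
  unfold thickSpiderRel; infer_instance

instance (k j : ℕ) (H : SimpleGraph (Fin j)) [DecidableRel H.Adj] :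
    DecidableRel (thickSpider k j H).Adj := fun u v =>
  inferInstanceAs (Decidable (u ≠ v ∧ (thickSpiderRel k j H u v ∨ thickSpiderRel k j H v u)))

section ThickSpiderAux

open Matrix

variable {k j : ℕ} {H : SimpleGraph (Fin j)}

lemma adj_cc (i m : Fin k) : (thickSpider k j H).Adj (Sum.inl i) (Sum.inl m) ↔ i ≠ m := by
  simp [thickSpider, thickSpiderRel, fromRel_adj]

lemma adj_cs (i m : Fin k) :
    (thickSpider k j H).Adj (Sum.inl i) (Sum.inr (Sum.inl m)) ↔ i ≠ m := by
  simp [thickSpider, thickSpiderRel, fromRel_adj, eq_comm]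

lemma adj_sc (i m : Fin k) :
    (thickSpider k j H).Adj (Sum.inr (Sum.inl i)) (Sum.inl m) ↔ i ≠ m := by
  simp [thickSpider, thickSpiderRel, fromRel_adj, eq_comm]

lemma adj_cr (i : Fin k) (t : Fin j) :
    (thickSpider k j H).Adj (Sum.inl i) (Sum.inr (Sum.inr t)) := by
  simp [thickSpider, thickSpiderRel, fromRel_adj]

lemma adj_rc (i : Fin k) (t : Fin j) :
    (thickSpider k j H).Adj (Sum.inr (Sum.inr t)) (Sum.inl i) := by
  simp [thickSpider, thickSpiderRel, fromRel_adj]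

lemma adj_ss (i m : Fin k) : ¬ (thickSpider k j H).Adj (Sum.inr (Sum.inl i)) (Sum.inr (Sum.inl m)) := by
  simp [thickSpider, thickSpiderRel, fromRel_adj]

lemma adj_sr (i : Fin k) (t : Fin j) :
    ¬ (thickSpider k j H).Adj (Sum.inr (Sum.inl i)) (Sum.inr (Sum.inr t)) := by
  simp [thickSpider, thickSpiderRel, fromRel_adj]

lemma adj_rs (i : Fin k) (t : Fin j) :
    ¬ (thickSpider k j H).Adj (Sum.inr (Sum.inr t)) (Sum.inr (Sum.inl i)) := by
  simp [thickSpider, thickSpiderRel, fromRel_adj]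

lemma adj_rr (t s : Fin j) :
    (thickSpider k j H).Adj (Sum.inr (Sum.inr t)) (Sum.inr (Sum.inr s)) ↔ H.Adj t s := by
  simp [thickSpider, thickSpiderRel, fromRel_adj]
  constructor
  · rintro ⟨h1, h2 | h2⟩
    · exact h2
    · exact h2.symm
  · intro h; exact ⟨fun he => H.loopless.irrefl t (he ▸ h), Or.inl h⟩

open Finset in
lemma sum_ite_ne {n : ℕ} (i : Fin n) :
    ∑ m : Fin n, (if i ≠ m then (1:ℝ) else 0) = n - 1 := by
  have h : ∀ m : Fin n, (if i ≠ m then (1:ℝ) else 0) = 1 - (if m = i then (1:ℝ) else 0) := by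
    intro m
    by_cases hm : m = i
    · simp [hm]
    · simp [hm, Ne.symm hm]
  rw [Finset.sum_congr rfl fun m _ => h m, Finset.sum_sub_distrib, Finset.sum_const,
    Finset.sum_ite_eq' Finset.univ i fun _ => (1:ℝ)]
  simp

lemma deg_cast (v : Fin k ⊕ Fin k ⊕ Fin j) [DecidableRel H.Adj] :
    (((thickSpider k j H).degree v : ℝ)) =
      ∑ w : Fin k ⊕ Fin k ⊕ Fin j, (if (thickSpider k j H).Adj v w then (1:ℝ) else 0) := by
  rw [SimpleGraph.degree, neighborFinset_eq_filter, Finset.card_filter]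
  push_cast
  rfl

lemma deg_c (i : Fin k) [DecidableRel H.Adj] :
    (((thickSpider k j H).degree (Sum.inl i) : ℝ)) = 2*k + j - 2 := by
  rw [deg_cast, Fintype.sum_sum_type, Fintype.sum_sum_type]
  simp only [adj_cc, adj_cs, adj_cr, if_true, sum_ite_ne]
  rw [Finset.sum_const]
  simp; ring

lemma deg_s (i : Fin k) [DecidableRel H.Adj] :
    (((thickSpider k j H).degree (Sum.inr (Sum.inl i)) : ℝ)) = k - 1 := by
  rw [deg_cast, Fintype.sum_sum_type, Fintype.sum_sum_type]
  simp only [adj_sc, adj_ss, adj_sr, if_false, sum_ite_ne]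
  simp

lemma key (hk : 2 ≤ k) [DecidableRel H.Adj] :
    ∃ μ : ℝ, (∀ z : ℤ, μ ≠ (z:ℝ)) ∧ ∃ x : (Fin k ⊕ Fin k ⊕ Fin j) → ℝ,
      x ≠ 0 ∧ (thickSpider k j H).lapMatrix ℝ *ᵥ x = μ • x := by
  have hk0 : (0:ℕ) < k := by omega
  have hk1 : (1:ℕ) < k := by omega
  set i0 : Fin k := ⟨0, hk0⟩ with hi0
  set i1 : Fin k := ⟨1, hk1⟩ with hi1
  have hne : i0 ≠ i1 := by simp [hi0, hi1, Fin.ext_iff]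
  have hne' : i1 ≠ i0 := hne.symm
  have hDpos : (0:ℝ) < ((k:ℝ)+j)^2 + 4 := by positivity
  set r : ℝ := Real.sqrt (((k:ℝ)+j)^2 + 4) with hrdef
  have hr2 : r^2 = ((k:ℝ)+j)^2 + 4 := Real.sq_sqrt hDpos.le
  have hrpos : 0 < r := Real.sqrt_pos.2 hDpos
  set μ : ℝ := ((3*(k:ℝ) + j) - 2 + r)/2 with hμ
  set a : ℝ := μ - ((k:ℝ)-1) with ha
  have hkj2 : (2:ℝ) ≤ (k:ℝ)+(j:ℝ) := by
    have h2 : (2:ℝ) ≤ (k:ℝ) := by exact_mod_cast hk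
    have h3 : (0:ℝ) ≤ (j:ℝ) := Nat.cast_nonneg j
    linarith
  refine ⟨μ, ?_, ?_⟩
  · intro z hz
    have h1 : ((k:ℝ)+j) < r := Real.lt_sqrt_of_sq_lt (by nlinarith)
    have h2 : r < ((k:ℝ)+j) + 1 := by
      rw [hrdef]
      exact (Real.sqrt_lt' (by linarith)).2 (by nlinarith)
    set n : ℤ := 2*z - 3*(k:ℤ) - (j:ℤ) + 2 with hn
    have hrn : (n:ℝ) = r := by
      push_cast [hn]
      rw [hμ] at hz
      linarith
    have hl : ((k:ℕ):ℤ) + ((j:ℕ):ℤ) < n := by exact_mod_cast (hrn ▸ h1)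
    have hu : n < ((k:ℕ):ℤ) + ((j:ℕ):ℤ) + 1 := by exact_mod_cast (hrn ▸ h2)
    omega
  · set c0 : Fin k ⊕ Fin k ⊕ Fin j := Sum.inl i0 with hc0
    set c1 : Fin k ⊕ Fin k ⊕ Fin j := Sum.inl i1 with hc1
    set s0 : Fin k ⊕ Fin k ⊕ Fin j := Sum.inr (Sum.inl i0) with hs0
    set s1 : Fin k ⊕ Fin k ⊕ Fin j := Sum.inr (Sum.inl i1) with hs1
    refine ⟨(a • Pi.single (M := fun _ => ℝ) c0 1 - a • Pi.single (M := fun _ => ℝ) c1 1 + Pi.single (M := fun _ => ℝ) s0 1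
        - Pi.single (M := fun _ => ℝ) s1 1 : (Fin k ⊕ Fin k ⊕ Fin j) → ℝ), ?_, ?_⟩
    · intro h0
      have := congrFun h0 s0
      simp [hc0, hc1, hs0, hs1, Pi.single_apply, hne, hne'] at this
    · have hL : ∀ v u, (thickSpider k j H).lapMatrix ℝ v u =
          (if v = u then (((thickSpider k j H).degree v : ℝ)) else 0)
            - (if (thickSpider k j H).Adj v u then 1 else 0) := by
        intro v u
        simp [SimpleGraph.lapMatrix, SimpleGraph.degMatrix, Matrix.diagonal_apply,
          Matrix.sub_apply]
      funext v
      rw [Matrix.mulVec_sub, Matrix.mulVec_add, Matrix.mulVec_sub, Matrix.mulVec_smul,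
        Matrix.mulVec_smul, Matrix.mulVec_single_one, Matrix.mulVec_single_one, Matrix.mulVec_single_one,
        Matrix.mulVec_single_one]
      simp only [Pi.add_apply, Pi.sub_apply, Pi.smul_apply, smul_eq_mul, mul_one, Matrix.col_apply]
      rw [hL, hL, hL, hL]
      rcases v with i | i | t
      · by_cases h0 : i = i0
        · subst h0
          simp [hc0, hc1, hs0, hs1, adj_cc, adj_cs, hne, hne', deg_c, Pi.single_apply]
          rw [ha, hμ]; linear_combination (-1/4 : ℝ) * hr2
        · by_cases h1 : i = i1
          · subst h1
            simp [hc0, hc1, hs0, hs1, adj_cc, adj_cs, hne, hne', h0, deg_c, Pi.single_apply]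
            rw [ha, hμ]; linear_combination (1/4 : ℝ) * hr2
          · simp [hc0, hc1, hs0, hs1, adj_cc, adj_cs, h0, h1, Pi.single_apply]
      · by_cases h0 : i = i0
        · subst h0
          simp [hc0, hc1, hs0, hs1, adj_sc, adj_ss, hne, hne', deg_s, Pi.single_apply]
          rw [ha]; ring
        · by_cases h1 : i = i1
          · subst h1
            simp [hc0, hc1, hs0, hs1, adj_sc, adj_ss, hne, hne', h0, deg_s, Pi.single_apply]
            rw [ha]; ring
          · simp [hc0, hc1, hs0, hs1, adj_sc, adj_ss, h0, h1, Pi.single_apply]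
      · simp [hc0, hc1, hs0, hs1, adj_rc, adj_rs, Pi.single_apply]

end ThickSpiderAux

open Matrix

/-- A thick spider (with arbitrary, possibly empty, head graph) is not `L`-integral. -/
theorem thickSpider_not_LIntegral {V : Type*} [Fintype V] [DecidableEq V]
    (G : SimpleGraph V) [DecidableRel G.Adj] (k j : ℕ) (hk : 2 ≤ k)
    (H : SimpleGraph (Fin j)) (h : Nonempty (G ≃g thickSpider k j H)) :
    ¬ LIntegral G := by
  obtain ⟨e⟩ := h
  letI : DecidableRel H.Adj := Classical.decRel _
  obtain ⟨μ, hμint, x, hx0, hx⟩ := key (H := H) hk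
  intro hL
  have hdeg : ∀ v, G.degree v = (thickSpider k j H).degree (e v) := by
    intro v
    rw [← SimpleGraph.card_neighborSet_eq_degree, ← SimpleGraph.card_neighborSet_eq_degree]
    exact Fintype.card_congr (e.mapNeighborSet v)
  have hLc : ∀ v w, G.lapMatrix ℝ v w = (thickSpider k j H).lapMatrix ℝ (e v) (e w) := by
    intro v w
    simp only [SimpleGraph.lapMatrix, SimpleGraph.degMatrix, Matrix.sub_apply,
      Matrix.diagonal_apply, SimpleGraph.adjMatrix_apply]
    rw [hdeg v]
    congr 1
    · by_cases hvw : v = w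
      · subst hvw; simp
      · have hne2 : e v ≠ e w := fun hc => hvw (e.toEquiv.injective hc)
        rw [if_neg hvw, if_neg hne2]
    · by_cases hvw : G.Adj v w
      · rw [if_pos hvw, if_pos (e.map_adj_iff.2 hvw)]
      · rw [if_neg hvw, if_neg (fun hc => hvw (e.map_adj_iff.1 hc))]
  set y : V → ℝ := fun v => x (e v) with hydef
  have hy0 : y ≠ 0 := by
    intro h0
    apply hx0
    funext w
    have h1 := congrFun h0 (e.symm w)
    simpa [hydef] using h1
  have hy : G.lapMatrix ℝ *ᵥ y = μ • y := by
    funext v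
    have h1 : (G.lapMatrix ℝ *ᵥ y) v
        = ∑ w, (thickSpider k j H).lapMatrix ℝ (e v) (e w) * x (e w) := by
      simp [Matrix.mulVec, dotProduct, hLc, hydef]
    have h3 : ∑ w : V, (thickSpider k j H).lapMatrix ℝ (e v) (e w) * x (e w)
        = ∑ w, (thickSpider k j H).lapMatrix ℝ (e v) w * x w :=
      Fintype.sum_equiv e.toEquiv _ _ (fun w => rfl)
    rw [h1, h3]
    have h2 := congrFun hx (e v)
    simpa [Matrix.mulVec, dotProduct, hydef] using h2
  have hspec : μ ∈ spectrum ℝ (G.lapMatrix ℝ) := by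
    rw [spectrum.mem_iff]
    intro hu
    have hdet := (Matrix.isUnit_iff_isUnit_det _).1 hu
    have h0 : (algebraMap ℝ (Matrix V V ℝ) μ - G.lapMatrix ℝ) *ᵥ y = 0 := by
      rw [Matrix.sub_mulVec, hy, Algebra.algebraMap_eq_smul_one, Matrix.smul_mulVec,
        Matrix.one_mulVec, sub_self]
    have hz : (algebraMap ℝ (Matrix V V ℝ) μ - G.lapMatrix ℝ).det = 0 :=
      Matrix.exists_mulVec_eq_zero_iff.1 ⟨y, hy0, h0⟩
    rw [hz] at hdet
    exact hdet.ne_zero rfl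
  obtain ⟨z, hz⟩ := hL μ hspec
  exact hμint z hz
end

section
/- Let j ≥ 1 and let G be a graph whose vertex set partitions into D = {a,b,c,d,e} and a nonempty set R with |R| = j such that: the edges inside D are exactly ab, ac, ad, be (so D induces the graph F_3); every vertex of R is adjacent to a and to b and to no other vertex of D; and the edges inside R are arbitrary. Then G is not L-integral. -/
open SimpleGraph Polynomial

/-- The graph obtained from `F₃` (vertices `a,b,c,d,e = 0,1,2,3,4`, edges
`ab, ac, ad, be`) by adding a nonempty set `R` of vertices, each adjacent exactly
to the midpoints `a` and `b`, with the edges inside `R` given by `H`. -/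
def F3Ext (j : ℕ) (H : SimpleGraph (Fin j)) : SimpleGraph (Fin 5 ⊕ Fin j) :=
  SimpleGraph.fromRel (fun u v =>
    (u = Sum.inl 0 ∧ v = Sum.inl 1) ∨ (u = Sum.inl 0 ∧ v = Sum.inl 2) ∨
    (u = Sum.inl 0 ∧ v = Sum.inl 3) ∨ (u = Sum.inl 1 ∧ v = Sum.inl 4) ∨
    (∃ r : Fin j, (u = Sum.inl 0 ∨ u = Sum.inl 1) ∧ v = Sum.inr r) ∨
    (∃ r s : Fin j, H.Adj r s ∧ u = Sum.inr r ∧ v = Sum.inr s))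

/-!
The partition `{a}, {b}, {c, d}, {e}, R` of the vertices of `F3Ext j H` is equitable: the
Laplacian maps vectors that are constant on its classes to such vectors, acting on them through
a `5 × 5` quotient matrix that depends only on `c = |R|` (the edges inside `R` contribute
nothing, as the vector is constant on `R`). The quotient matrix has characteristic polynomial
`μ · p_c(μ)` with `p_c(0) > 0 > p_c(1)`, so it has an eigenvalue strictly between `0` and `1`,
and lifting an eigenvector gives a Laplacian eigenvector with that non-integral eigenvalue.
-/

open Matrix

namespace SimpleGraph

variable {V W : Type*} [Fintype V] [DecidableEq V] [Fintype W] [DecidableEq W]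
  {G : SimpleGraph V} {G' : SimpleGraph W} [DecidableRel G.Adj] [DecidableRel G'.Adj]

theorem Iso.reindex_lapMatrix (R : Type*) [AddGroupWithOne R] (f : G ≃g G') :
    (G.lapMatrix R).reindex f f = G'.lapMatrix R := by
  rw [lapMatrix, lapMatrix, ← f.reindex_adjMatrix R]
  ext i k
  have hdeg : G.degree ((f : V ≃ W).symm i) = G'.degree i := f.symm.degree_eq i
  simp [degMatrix, diagonal_apply, hdeg]

theorem Iso.spectrum_lapMatrix (R : Type*) [CommRing R] (f : G ≃g G') :
    spectrum R (G.lapMatrix R) = spectrum R (G'.lapMatrix R) := by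
  rw [← f.reindex_lapMatrix R, ← coe_reindexAlgEquiv R R, AlgEquiv.spectrum_eq]

theorem lapMatrix_mulVec_apply_eq_sum {R : Type*} [NonAssocRing R] (x : V → R) (u : V) :
    (G.lapMatrix R *ᵥ x) u = ∑ w, if G.Adj u w then x u - x w else 0 := by
  simp_rw [lapMatrix_mulVec_apply, degree_eq_sum_if_adj, Finset.sum_mul,
    neighborFinset_eq_filter, Finset.sum_filter, ← Finset.sum_sub_distrib]
  exact Finset.sum_congr rfl fun w _ => by split_ifs <;> simp

end SimpleGraph

theorem Matrix.mem_spectrum_of_mulVec_eq_smul {n K : Type*} [Fintype n] [DecidableEq n] [Field K]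
    {A : Matrix n n K} {v : n → K} {μ : K} (hv : v ≠ 0) (hAv : A *ᵥ v = μ • v) :
    μ ∈ spectrum K A := by
  rw [← spectrum_toLin', ← Module.End.hasEigenvalue_iff_mem_spectrum]
  exact Module.End.hasEigenvalue_of_hasEigenvector ⟨Module.End.mem_eigenspace_iff.mpr hAv, hv⟩

theorem not_LIntegral_of_mem_spectrum_Ioo {V : Type*} [Fintype V] [DecidableEq V]
    {G : SimpleGraph V} [DecidableRel G.Adj] {μ : ℝ} (hμ : μ ∈ spectrum ℝ (G.lapMatrix ℝ))
    (n : ℤ) (hn : μ ∈ Set.Ioo (n : ℝ) (n + 1)) : ¬ LIntegral G := by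
  rintro hL
  obtain ⟨z, rfl⟩ := hL μ hμ
  obtain ⟨h₁, h₂⟩ := hn
  norm_cast at h₁ h₂
  omega

namespace F3Ext

variable {j : ℕ} {H : SimpleGraph (Fin j)}

@[simp] lemma adj_inl_inr (i : Fin 5) (r : Fin j) :
    (F3Ext j H).Adj (.inl i) (.inr r) ↔ i = 0 ∨ i = 1 := by
  simp [F3Ext, fromRel_adj]

@[simp] lemma adj_inr_inl (i : Fin 5) (r : Fin j) :
    (F3Ext j H).Adj (.inr r) (.inl i) ↔ i = 0 ∨ i = 1 := by
  rw [adj_comm, adj_inl_inr]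

@[simp] lemma adj_inr_inr (r s : Fin j) : (F3Ext j H).Adj (.inr r) (.inr s) ↔ H.Adj r s := by
  simp only [F3Ext, fromRel_adj]
  simpa [adj_comm H s r] using fun h : H.Adj r s => h.ne

/-- The coordinates `0, …, 4` of `v` are the values on the classes `{a}, {b}, {c, d}, {e}, R`. -/
def liftVec (j : ℕ) (v : Fin 5 → ℝ) : Fin 5 ⊕ Fin j → ℝ :=
  Sum.elim ![v 0, v 1, v 2, v 2, v 3] fun _ => v 4

theorem liftVec_smul (μ : ℝ) (v : Fin 5 → ℝ) : liftVec j (μ • v) = μ • liftVec j v := by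
  ext (i | r)
  · fin_cases i <;> rfl
  · rfl

def quotientLap (c : ℝ) : Matrix (Fin 5) (Fin 5) ℝ :=
  !![3 + c, -1, -2, 0, -c;
     -1, 2 + c, 0, -1, -c;
     -1, 0, 1, 0, 0;
     0, -1, 0, 1, 0;
     -1, -1, 0, 0, 2]

open scoped Classical in
theorem lapMatrix_mulVec_liftVec (v : Fin 5 → ℝ) :
    (F3Ext j H).lapMatrix ℝ *ᵥ liftVec j v = liftVec j (quotientLap j *ᵥ v) := by
  funext u
  rw [lapMatrix_mulVec_apply_eq_sum, Fintype.sum_sum_type]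
  rcases u with i | r
  · fin_cases i <;>
      simp [liftVec, quotientLap, Fin.sum_univ_five, F3Ext, fromRel_adj, mulVec, dotProduct] <;>
      ring
  · simp [liftVec, quotientLap, Fin.sum_univ_five, mulVec, dotProduct]
    ring

/-- `μ * quotientPoly c μ` is the characteristic polynomial of `quotientLap c`. -/
def quotientPoly (c μ : ℝ) : ℝ :=
  μ ^ 4 - (9 + 2 * c) * μ ^ 3 + (27 + 11 * c + c ^ 2) * μ ^ 2 - (31 + 16 * c + 2 * c ^ 2) * μ
    + (10 + 7 * c + c ^ 2)

theorem exists_quotientPoly_eq_zero {c : ℝ} (hc : 0 ≤ c) :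
    ∃ μ ∈ Set.Ioo (0 : ℝ) 1, quotientPoly c μ = 0 := by
  have h₀ : 0 < quotientPoly c 0 := by simp only [quotientPoly]; nlinarith
  have h₁ : quotientPoly c 1 < 0 := by simp only [quotientPoly]; nlinarith
  have hcont : ContinuousOn (quotientPoly c) (Set.Icc 0 1) := by
    unfold quotientPoly; fun_prop
  exact intermediate_value_Ioo' zero_le_one hcont ⟨h₁, h₀⟩

/-- Solving the rows of `c, d`, `e` and `R` of the eigen-equation expresses the other
coordinates through `s` and `e`; the row of `a` then fixes `s : e`, and the row of `b`
holds exactly when `quotientPoly c μ = 0`. -/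
def quotientEigenvec (c μ : ℝ) : Fin 5 → ℝ :=
  let s := (1 - μ) * (2 - μ + c)
  let e := (3 + c - μ) * (1 - μ) * (2 - μ) - 2 * (2 - μ) - c * (1 - μ)
  ![(1 - μ) * (2 - μ) * s, (1 - μ) * (2 - μ) * e, (2 - μ) * s, (2 - μ) * e, (1 - μ) * (s + e)]

theorem quotientLap_mulVec_quotientEigenvec {c μ : ℝ} (hμ : quotientPoly c μ = 0) :
    quotientLap c *ᵥ quotientEigenvec c μ = μ • quotientEigenvec c μ := by
  unfold quotientPoly at hμ
  ext i
  fin_cases i <;> simp [quotientLap, quotientEigenvec, mulVec, dotProduct, Fin.sum_univ_five]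
  · ring
  · linear_combination -μ * (2 - μ) * hμ
  · ring
  · ring
  · ring

theorem quotientEigenvec_zero_pos {c μ : ℝ} (hc : 0 ≤ c) (hμ : μ ∈ Set.Ioo (0 : ℝ) 1) :
    0 < quotientEigenvec c μ 0 := by
  obtain ⟨-, hμ₁⟩ := hμ
  have h₁ : 0 < 1 - μ := by linarith
  have h₂ : 0 < 2 - μ := by linarith
  have h₃ : 0 < 2 - μ + c := by linarith
  exact mul_pos (mul_pos h₁ h₂) (mul_pos h₁ h₃)

open scoped Classical in
theorem exists_mem_spectrum_lapMatrix_Ioo (j : ℕ) (H : SimpleGraph (Fin j)) :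
    ∃ μ ∈ Set.Ioo (0 : ℝ) 1, μ ∈ spectrum ℝ ((F3Ext j H).lapMatrix ℝ) := by
  obtain ⟨μ, hμ, hroot⟩ := exists_quotientPoly_eq_zero (Nat.cast_nonneg j)
  refine ⟨μ, hμ, mem_spectrum_of_mulVec_eq_smul (v := liftVec j (quotientEigenvec j μ)) ?_ ?_⟩
  · exact fun h ↦ (quotientEigenvec_zero_pos (Nat.cast_nonneg j) hμ).ne' (congrFun h (.inl 0))
  · rw [lapMatrix_mulVec_liftVec, quotientLap_mulVec_quotientEigenvec hroot, liftVec_smul]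

end F3Ext

theorem F3Ext_not_LIntegral_general {V : Type*} [Fintype V] [DecidableEq V]
    (G : SimpleGraph V) [DecidableRel G.Adj] (j : ℕ)
    (H : SimpleGraph (Fin j)) (h : Nonempty (G ≃g F3Ext j H)) :
    ¬ LIntegral G := by
  classical
  obtain ⟨f⟩ := h
  obtain ⟨μ, hμ, hspec⟩ := F3Ext.exists_mem_spectrum_lapMatrix_Ioo j H
  exact not_LIntegral_of_mem_spectrum_Ioo (f.spectrum_lapMatrix ℝ ▸ hspec) 0 (by simpa using hμ)

/-- A graph consisting of `F₃` together with a nonempty set of extra vertices, each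
adjacent exactly to the two midpoints of `F₃`, is not `L`-integral. -/
theorem F3Ext_not_LIntegral {V : Type*} [Fintype V] [DecidableEq V]
    (G : SimpleGraph V) [DecidableRel G.Adj] (j : ℕ) (hj : 1 ≤ j)
    (H : SimpleGraph (Fin j)) (h : Nonempty (G ≃g F3Ext j H)) :
    ¬ LIntegral G :=
  F3Ext_not_LIntegral_general G j H h
end

section
/- If G is a P4-extendible graph, then its complement graph is also P4-extendible. -/
open SimpleGraph Polynomial

/-- The finite vertex set `W` induces a path `P₄` in `G`. -/
def InducesP4 {V : Type*} (G : SimpleGraph V) (W : Finset V) : Prop :=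
  Nonempty (G.induce (W : Set V) ≃g SimpleGraph.pathGraph 4)

/-- A graph is `P₄`-sparse if every set of five vertices contains at most one
4-element subset inducing a path `P₄`. -/
def P4Sparse {V : Type*} (G : SimpleGraph V) : Prop :=
  ∀ s : Finset V, s.card = 5 →
    {W : Finset V | W ⊆ s ∧ W.card = 4 ∧ InducesP4 G W}.Subsingleton

/-- A graph is `P₄`-extendible if for every vertex subset `W` inducing a path `P₄`
there is at most one vertex `x ∉ W` that induces a `P₄` together with some three
vertices of `W`. -/
def P4Extendible {V : Type*} [DecidableEq V] (G : SimpleGraph V) : Prop :=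
  ∀ W : Finset V, InducesP4 G W →
    {x : V | x ∉ W ∧ ∃ T : Finset V, T ⊆ W ∧ T.card = 3 ∧
      InducesP4 G (insert x T)}.Subsingleton

/-!
Complementation commutes with taking induced subgraphs and preserves isomorphism, and `P₄` is
self-complementary (`0-1-2-3` in the complement is the path `2-0-3-1`). Hence a vertex set induces
a `P₄` in `G` exactly when it does in `Gᶜ`, and the definition of `P₄`-extendibility refers to `G`
only through such sets.
-/

namespace SimpleGraph

variable {V W : Type*}

theorem induce_compl (G : SimpleGraph V) (s : Set V) : Gᶜ.induce s = (G.induce s)ᶜ := by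
  ext u v
  simp [Subtype.ext_iff]

def Iso.compl {G : SimpleGraph V} {H : SimpleGraph W} (e : G ≃g H) : Gᶜ ≃g Hᶜ where
  toEquiv := e.toEquiv
  map_rel_iff' {u v} := by simpa using fun _ ↦ e.map_adj_iff.not

def pathGraphFourComplIso : (pathGraph 4)ᶜ ≃g pathGraph 4 where
  toEquiv := Equiv.mk ![1, 3, 0, 2] ![2, 0, 3, 1] (by decide) (by decide)
  map_rel_iff' {a b} := by
    fin_cases a <;> fin_cases b <;> simp [pathGraph_adj]

end SimpleGraph

theorem InducesP4.compl {V : Type*} {G : SimpleGraph V} {W : Finset V} (h : InducesP4 G W) :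
    InducesP4 Gᶜ W := by
  obtain ⟨e⟩ := h
  rw [InducesP4, induce_compl]
  exact ⟨e.compl.trans pathGraphFourComplIso⟩

@[simp]
theorem inducesP4_compl_iff {V : Type*} {G : SimpleGraph V} {W : Finset V} :
    InducesP4 Gᶜ W ↔ InducesP4 G W :=
  ⟨fun h ↦ compl_compl G ▸ h.compl, InducesP4.compl⟩

/-- The complement of a `P₄`-extendible graph is `P₄`-extendible. -/
theorem P4Extendible.compl {V : Type*} [DecidableEq V] (G : SimpleGraph V)
    (hG : P4Extendible G) : P4Extendible Gᶜ := by
  simpa only [P4Extendible, inducesP4_compl_iff] using hG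
end
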